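/- arXiv:1503.05660 — 3 statements merged into one kernel-verified Lean document; each statement's English description precedes it below -/
import Mathlib

section
/- Let n ≡ 2 (mod 4) with n > 1, and let T ∈ SU(n) be reversible with no eigenvalue equal to 1 or −1. Then T can be written as T = J₂J₁ where J₁, J₂ ∈ U(n) are involutions (J₁² = 1 = J₂²) each of determinant −1. -/
/-!
A unitary `T` is unitarily diagonalisable, `T = U D U⋆` with `D = diagonal d`. Reversibility makes
`T` similar to `T⁻¹ = T⋆`, so the multiset of eigenvalues `d i` is invariant under complex
conjugation. The `d i` lie on the unit circle and avoid `±1`, so none of them is real, and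
conjugation pairs them off through a fixed-point-free involution `σ` of the indices. With `P` the
permutation matrix of `σ`, `J₁ = U P U⋆` is an involution with `J₁ T J₁ = T⁻¹`, hence so is
`J₂ = T J₁`; finally `det J₁ = sign σ = (-1) ^ (n / 2) = -1` as `n ≡ 2 (mod 4)`, and
`det J₂ = det T * det J₁ = -1`.
-/

open Module Module.End ComplexStarModule Matrix Unitary Polynomial

theorem LinearMap.IsSymmetric.exists_orthonormalBasis_mem_eigenspace_inf_eigenspace
    {𝕜 E ι : Type*} [RCLike 𝕜] [NormedAddCommGroup E] [InnerProductSpace 𝕜 E]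
    [FiniteDimensional 𝕜 E] [Fintype ι] {A B : E →ₗ[𝕜] E} (hA : A.IsSymmetric)
    (hB : B.IsSymmetric) (hAB : Commute A B) (hι : Fintype.card ι = finrank 𝕜 E) :
    ∃ b : OrthonormalBasis ι 𝕜 E, ∀ i, ∃ μ : 𝕜 × 𝕜, b i ∈ eigenspace A μ.2 ⊓ eigenspace B μ.1 := by
  classical
  set V : 𝕜 × 𝕜 → Submodule 𝕜 E := fun μ => eigenspace A μ.2 ⊓ eigenspace B μ.1
  have hV : DirectSum.IsInternal V := hA.directSum_isInternal_of_commute hB hAB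
  -- Only finitely many joint eigenspaces are nonzero; the basis is collected from those.
  have : Fintype {μ // V μ ≠ ⊥} :=
    (Submodule.finite_ne_bot_of_iSupIndep hV.submodule_iSupIndep).fintype
  have hW := DirectSum.isInternal_ne_bot_iff.mpr hV
  have hW' := (hA.orthogonalFamily_eigenspace_inf_eigenspace hB).comp
    (Subtype.val_injective (p := fun μ => V μ ≠ ⊥))
  refine ⟨(hW.subordinateOrthonormalBasis rfl hW').reindex (Fintype.equivFinOfCardEq hι).symm,
    fun i => ⟨(hW.subordinateOrthonormalBasisIndex rfl (Fintype.equivFinOfCardEq hι i) hW').1, ?_⟩⟩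
  simpa only [OrthonormalBasis.reindex_apply, Equiv.symm_symm] using
    hW.subordinateOrthonormalBasis_subordinate rfl _ hW'

theorem ContinuousLinearMap.exists_orthonormalBasis_eigenvectors_of_isStarNormal
    {E ι : Type*} [NormedAddCommGroup E] [InnerProductSpace ℂ E] [FiniteDimensional ℂ E]
    [Fintype ι] (S : E →L[ℂ] E) [IsStarNormal S] (hι : Fintype.card ι = finrank ℂ E) :
    ∃ (b : OrthonormalBasis ι ℂ E) (μ : ι → ℂ), ∀ i, S (b i) = μ i • b i := by
  obtain ⟨b, hb⟩ := LinearMap.IsSymmetric.exists_orthonormalBasis_mem_eigenspace_inf_eigenspace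
    (ℜ S).2.isSymmetric (ℑ S).2.isSymmetric
    (congrArg ContinuousLinearMap.toLinearMap (Commute.realPart_imaginaryPart S).eq) hι
  choose μ hμ using hb
  refine ⟨b, fun i => (μ i).2 + Complex.I * (μ i).1, fun i => ?_⟩
  obtain ⟨hre, him⟩ := Submodule.mem_inf.mp (hμ i)
  rw [mem_eigenspace_iff, ContinuousLinearMap.coe_coe] at hre him
  conv_lhs => rw [← realPart_add_I_smul_imaginaryPart S]
  rw [_root_.add_apply, _root_.smul_apply, hre, him, smul_smul, ← add_smul]

theorem Matrix.exists_unitary_eq_conjStarAlgAut_diagonal {n : Type*} [Fintype n] [DecidableEq n]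
    (T : Matrix n n ℂ) [IsStarNormal T] :
    ∃ (U : unitaryGroup n ℂ) (d : n → ℂ), T = conjStarAlgAut ℂ _ U (diagonal d) := by
  obtain ⟨b, d, hb⟩ :=
    (toEuclideanCLM (𝕜 := ℂ) T).exists_orthonormalBasis_eigenvectors_of_isStarNormal
      finrank_euclideanSpace.symm
  set U := (EuclideanSpace.basisFun n ℂ).toBasis.toMatrix b
  have hU : U ∈ unitaryGroup n ℂ :=
    (EuclideanSpace.basisFun n ℂ).toMatrix_orthonormalBasis_mem_unitary b
  have hTU : T * U = U * diagonal d := by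
    ext i j
    simpa [U, Basis.toMatrix_apply, mul_apply, mulVec, dotProduct, diagonal_apply, mul_comm]
      using congrArg (· i) (hb j)
  refine ⟨⟨U, hU⟩, d, ?_⟩
  rw [conjStarAlgAut_apply, ← hTU, mul_assoc, mul_star_self_of_mem hU, mul_one]

section UnitaryConj

variable {n R : Type*} [Fintype n] [DecidableEq n] [CommRing R] [StarRing R]

theorem Matrix.charpoly_conjStarAlgAut (U : unitaryGroup n R) (M : Matrix n n R) :
    (conjStarAlgAut R _ U M).charpoly = M.charpoly := by
  rw [conjStarAlgAut_apply, charpoly_mul_comm, ← mul_assoc, coe_star_mul_self, one_mul]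

theorem Matrix.det_conjStarAlgAut (U : unitaryGroup n R) (M : Matrix n n R) :
    (conjStarAlgAut R _ U M).det = M.det := by
  rw [conjStarAlgAut_apply, det_mul, det_mul, mul_right_comm, ← det_mul,
    mul_star_self_of_mem U.2, det_one, one_mul]

theorem Matrix.star_mul_self_eq_one_of_conjStarAlgAut_diagonal_mem_unitaryGroup
    (U : unitaryGroup n R) {d : n → R} (h : conjStarAlgAut R _ U (diagonal d) ∈ unitaryGroup n R)
    (i : n) : star (d i) * d i = 1 := by
  have hd : star (diagonal d) * diagonal d = 1 := by
    have := congrArg (conjStarAlgAut R _ U).symm (star_mul_self_of_mem h)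
    rwa [map_mul, map_star, StarAlgEquiv.symm_apply_apply, map_one] at this
  rw [star_eq_conjTranspose, diagonal_conjTranspose, diagonal_mul_diagonal] at hd
  simpa using congrFun₂ hd i i

theorem Matrix.exists_mulVec_conjStarAlgAut_diagonal_eq_smul [Nontrivial R]
    (U : unitaryGroup n R) (d : n → R) (i : n) :
    ∃ v ≠ 0, conjStarAlgAut R _ U (diagonal d) *ᵥ v = d i • v := by
  refine ⟨(U : Matrix n n R) *ᵥ Pi.single i 1, fun hv => ?_, ?_⟩
  · have := congrArg (star (U : Matrix n n R) *ᵥ ·) hv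
    simp only [mulVec_mulVec, star_mul_self_of_mem U.2, one_mulVec, mulVec_zero] at this
    simpa using congrFun this i
  · rw [conjStarAlgAut_apply, mulVec_mulVec, mul_assoc, mul_assoc, star_mul_self_of_mem U.2,
      mul_one, ← mulVec_mulVec, diagonal_mulVec_single]
    simp

end UnitaryConj

theorem Matrix.map_univ_eq_of_charpoly_diagonal_eq {n R : Type*} [Fintype n] [DecidableEq n]
    [CommRing R] [IsDomain R] {d d' : n → R}
    (h : (diagonal d).charpoly = (diagonal d').charpoly) :
    Finset.univ.val.map d = Finset.univ.val.map d' := by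
  have hprod : ∀ e : n → R,
      (diagonal e).charpoly = ((Finset.univ.val.map e).map (X - C ·)).prod := fun e => by
    rw [charpoly_diagonal, Finset.prod_eq_multiset_prod, Multiset.map_map]
    rfl
  rw [← roots_multiset_prod_X_sub_C (Finset.univ.val.map d), ← hprod, h, hprod,
    roots_multiset_prod_X_sub_C]

theorem Matrix.map_univ_star_eq_of_conjStarAlgAut_eq_star {n : Type*} [Fintype n] [DecidableEq n]
    (U V : unitaryGroup n ℂ) {d : n → ℂ}
    (h : conjStarAlgAut ℂ _ V (conjStarAlgAut ℂ _ U (diagonal d)) =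
      star (conjStarAlgAut ℂ _ U (diagonal d))) :
    Finset.univ.val.map (star d) = Finset.univ.val.map d := by
  refine map_univ_eq_of_charpoly_diagonal_eq ?_
  rw [← diagonal_conjTranspose, ← star_eq_conjTranspose, ← charpoly_conjStarAlgAut U, map_star,
    ← h, charpoly_conjStarAlgAut, charpoly_conjStarAlgAut]

theorem Fintype.exists_perm_apply_eq_of_map_univ_eq {α β : Type*} [Fintype α]
    {f g : α → β} (h : Finset.univ.val.map f = Finset.univ.val.map g) :
    ∃ e : Equiv.Perm α, ∀ a, g (e a) = f a := by
  classical
  have hfiber : ∀ c, Fintype.card {a // f a = c} = Fintype.card {a // g a = c} := fun c => by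
    simpa [Multiset.count_map, Fintype.card_subtype, Finset.card_def, Finset.filter_val, eq_comm]
      using congrArg (Multiset.count c) h
  exact ⟨Equiv.ofFiberEquiv fun c => Fintype.equivOfCardEq (hfiber c), Equiv.ofFiberEquiv_map _⟩

theorem Equiv.Perm.exists_sq_eq_one_of_map_univ_eq {α β : Type*} [Fintype α]
    {f : α → β} {τ : β → β} (hτ : Function.Involutive τ) (p : β → Prop)
    (hp : ∀ a, p (τ (f a)) ↔ ¬ p (f a)) (h : Finset.univ.val.map (τ ∘ f) = Finset.univ.val.map f) :
    ∃ σ : Equiv.Perm α, σ ^ 2 = 1 ∧ (∀ a, σ a ≠ a) ∧ ∀ a, f (σ a) = τ (f a) := by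
  classical
  obtain ⟨e, he⟩ := Fintype.exists_perm_apply_eq_of_map_univ_eq h
  simp only [Function.comp_apply] at he
  have he_symm : ∀ a, f (e.symm a) = τ (f a) := fun a => by
    rw [← hτ (f (e.symm a)), ← he, Equiv.apply_symm_apply]
  -- `e` maps each side of `p` to the other one, so following `e` from one side and `e⁻¹` from
  -- the other gives an involution.
  let s : α → α := fun a => if p (f a) then e a else e.symm a
  have hs : ∀ a, f (s a) = τ (f a) := fun a => by
    by_cases ha : p (f a) <;> simp [s, ha, he, he_symm]
  have hs_inv : Function.Involutive s := fun a => by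
    by_cases ha : p (f a) <;> simp [s, ha, he, he_symm, hp]
  refine ⟨hs_inv.toPerm s, Equiv.ext fun a => hs_inv a, fun a ha => ?_, hs⟩
  change s a = a at ha
  have := hp a
  rw [← hs a, ha] at this
  tauto

theorem Equiv.Perm.sign_of_sq_eq_one {α : Type*} [Fintype α] [DecidableEq α] {σ : Equiv.Perm α}
    (hσ : σ ^ 2 = 1) (hfree : ∀ a, σ a ≠ a) : sign σ = (-1) ^ (Fintype.card α / 2) := by
  have : Fact (Nat.Prime 2) := ⟨Nat.prime_two⟩
  have hcycle := cycleType_of_pow_prime_eq_one hσ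
  have hcard : Fintype.card α = σ.cycleType.card * 2 := by
    rw [← Finset.card_univ, ← Finset.eq_univ_of_forall fun a => mem_support.mpr (hfree a),
      ← sum_cycleType, hcycle, Multiset.sum_replicate, smul_eq_mul, Multiset.card_replicate]
  rw [sign_of_cycleType, hcycle, Multiset.sum_replicate, Multiset.card_replicate, hcard,
    smul_eq_mul, Nat.mul_div_cancel _ two_pos, pow_add, pow_mul, Int.units_sq, one_mul]

theorem Matrix.permMatrix_mul_diagonal_mul_permMatrix_inv {n R : Type*} [Fintype n]
    [DecidableEq n] [CommRing R] (σ : Equiv.Perm n) (d : n → R) :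
    σ.permMatrix R * diagonal d * (σ⁻¹).permMatrix R = diagonal (d ∘ σ) := by
  ext i j
  simp [Equiv.Perm.permMatrix, PEquiv.toMatrix_toPEquiv_mul, PEquiv.mul_toMatrix_toPEquiv,
    diagonal_apply, Equiv.Perm.inv_def]

theorem Matrix.permMatrix_mem_unitaryGroup {n R : Type*} [Fintype n] [DecidableEq n]
    [CommRing R] [StarRing R] (σ : Equiv.Perm n) : σ.permMatrix R ∈ unitaryGroup n R := by
  rw [mem_unitaryGroup_iff', star_eq_conjTranspose, conjTranspose_permMatrix, ← permMatrix_mul,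
    mul_inv_cancel, permMatrix_one]

theorem Complex.im_ne_zero_of_star_mul_self_eq_one {z : ℂ} (hz : star z * z = 1) (h1 : z ≠ 1)
    (hm1 : z ≠ -1) : z.im ≠ 0 := by
  intro him
  have hre : z = z.re := Complex.ext rfl (by simp [him])
  rw [hre] at hz h1 hm1
  have : ((z.re * z.re : ℝ) : ℂ) = 1 := by simpa using hz
  norm_cast at this
  rcases mul_self_eq_one_iff.mp this with h | h <;> simp [h] at h1 hm1

section NonrealSpectrum

variable {n : Type*} [Fintype n] [DecidableEq n] {d : n → ℂ}

theorem Matrix.exists_involution_mul_diagonal_mul_eq_diagonal_star (hd : ∀ i, (d i).im ≠ 0)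
    (h : Finset.univ.val.map (star d) = Finset.univ.val.map d) :
    ∃ P ∈ unitaryGroup n ℂ, P * P = 1 ∧ P.det = (-1) ^ (Fintype.card n / 2) ∧
      P * diagonal d * P = diagonal (star d) := by
  have hp : ∀ i, 0 < (star (d i)).im ↔ ¬ 0 < (d i).im := fun i => by
    rw [Complex.star_def, Complex.conj_im, neg_pos, not_lt]
    exact ⟨le_of_lt, fun h => lt_of_le_of_ne h (hd i)⟩
  obtain ⟨σ, hσ2, hσfree, hσd⟩ :=
    Equiv.Perm.exists_sq_eq_one_of_map_univ_eq star_involutive (fun z => 0 < z.im) hp h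
  have hσ_inv : σ⁻¹ = σ := inv_eq_of_mul_eq_one_right (by rw [← sq, hσ2])
  refine ⟨σ.permMatrix ℂ, permMatrix_mem_unitaryGroup σ, ?_, ?_, ?_⟩
  · rw [← permMatrix_mul, ← sq, hσ2, permMatrix_one]
  · rw [det_permutation, Equiv.Perm.sign_of_sq_eq_one hσ2 hσfree]
    simp
  · nth_rw 2 [← hσ_inv]
    rw [permMatrix_mul_diagonal_mul_permMatrix_inv]
    exact congrArg diagonal (funext hσd)

theorem Matrix.exists_involution_mul_conjStarAlgAut_diagonal_mul_eq_star (U : unitaryGroup n ℂ)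
    (hd : ∀ i, (d i).im ≠ 0) (h : Finset.univ.val.map (star d) = Finset.univ.val.map d) :
    ∃ J ∈ unitaryGroup n ℂ, J * J = 1 ∧ J.det = (-1) ^ (Fintype.card n / 2) ∧
      J * conjStarAlgAut ℂ _ U (diagonal d) * J = star (conjStarAlgAut ℂ _ U (diagonal d)) := by
  obtain ⟨P, hP, hP2, hPdet, hPd⟩ := exists_involution_mul_diagonal_mul_eq_diagonal_star hd h
  refine ⟨conjStarAlgAut ℂ _ U P, mul_mem (mul_mem U.2 hP) (star_mem U.2), ?_, ?_, ?_⟩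
  · rw [← map_mul, hP2, map_one]
  · rw [det_conjStarAlgAut, hPdet]
  · rw [← map_mul, ← map_mul, hPd, ← map_star, star_eq_conjTranspose, diagonal_conjTranspose]

end NonrealSpectrum

theorem reversible_su_no_pm_one_eigenvalue_product_two_involutions_general
    (n : ℕ) (hmod : n % 4 = 2)
    (T : Matrix (Fin n) (Fin n) ℂ)
    (hT : T ∈ Matrix.specialUnitaryGroup (Fin n) ℂ)
    (hrev : ∃ g : Matrix (Fin n) (Fin n) ℂ,
      g ∈ Matrix.unitaryGroup (Fin n) ℂ ∧ g * T * g⁻¹ = T⁻¹)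
    (heig : ¬ ∃ v : Fin n → ℂ, v ≠ 0 ∧ (T.mulVec v = v ∨ T.mulVec v = -v)) :
    ∃ J₁ J₂ : Matrix (Fin n) (Fin n) ℂ,
      J₁ ∈ Matrix.unitaryGroup (Fin n) ℂ ∧
      J₂ ∈ Matrix.unitaryGroup (Fin n) ℂ ∧
      J₁ * J₁ = 1 ∧ J₂ * J₂ = 1 ∧
      J₁.det = -1 ∧ J₂.det = -1 ∧
      T = J₂ * J₁ := by
  obtain ⟨hTu, hTdet⟩ := mem_specialUnitaryGroup_iff.mp hT
  have : IsStarNormal T := isStarNormal_of_mem_unitary hTu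
  obtain ⟨U, d, hTd⟩ := exists_unitary_eq_conjStarAlgAut_diagonal T
  have hd : ∀ i, (d i).im ≠ 0 := fun i => by
    obtain ⟨v, hv, hTv⟩ := exists_mulVec_conjStarAlgAut_diagonal_eq_smul U d i
    rw [← hTd] at hTv
    refine Complex.im_ne_zero_of_star_mul_self_eq_one
      (star_mul_self_eq_one_of_conjStarAlgAut_diagonal_mem_unitaryGroup U (hTd ▸ hTu) i) ?_ ?_
    · exact fun h1 => heig ⟨v, hv, .inl (by rw [hTv, h1, one_smul])⟩
    · exact fun hm1 => heig ⟨v, hv, .inr (by rw [hTv, hm1, neg_one_smul])⟩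
  obtain ⟨g, hg, hgT⟩ := hrev
  rw [inv_eq_left_inv (star_mul_self_of_mem hg), inv_eq_left_inv (star_mul_self_of_mem hTu),
    hTd] at hgT
  obtain ⟨J, hJ, hJ2, hJdet, hJT⟩ := exists_involution_mul_conjStarAlgAut_diagonal_mul_eq_star U hd
    (map_univ_star_eq_of_conjStarAlgAut_eq_star U ⟨g, hg⟩ hgT)
  rw [← hTd] at hJT
  rw [Fintype.card_fin, (Nat.odd_iff.mpr (by omega) : Odd (n / 2)).neg_one_pow] at hJdet
  refine ⟨J, T * J, hJ, mul_mem hTu hJ, hJ2, ?_, hJdet, ?_, ?_⟩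
  · rw [mul_assoc, ← mul_assoc J, hJT, mul_star_self_of_mem hTu]
  · rw [det_mul, hTdet, hJdet, one_mul]
  · rw [mul_assoc, hJ2, mul_one]

/-- If `n ≡ 2 (mod 4)`, `n > 1`, and `T ∈ SU(n)` is reversible with no eigenvalue
`1` or `-1`, then `T = J₂ * J₁` for involutions `J₁, J₂ ∈ U(n)` of determinant `-1`. -/
theorem reversible_su_no_pm_one_eigenvalue_product_two_involutions
    (n : ℕ) (hn : 1 < n) (hmod : n % 4 = 2)
    (T : Matrix (Fin n) (Fin n) ℂ)
    (hT : T ∈ Matrix.specialUnitaryGroup (Fin n) ℂ)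
    (hrev : ∃ g : Matrix (Fin n) (Fin n) ℂ,
      g ∈ Matrix.unitaryGroup (Fin n) ℂ ∧ g * T * g⁻¹ = T⁻¹)
    (heig : ¬ ∃ v : Fin n → ℂ, v ≠ 0 ∧ (T.mulVec v = v ∨ T.mulVec v = -v)) :
    ∃ J₁ J₂ : Matrix (Fin n) (Fin n) ℂ,
      J₁ ∈ Matrix.unitaryGroup (Fin n) ℂ ∧
      J₂ ∈ Matrix.unitaryGroup (Fin n) ℂ ∧
      J₁ * J₁ = 1 ∧ J₂ * J₂ = 1 ∧
      J₁.det = -1 ∧ J₂.det = -1 ∧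
      T = J₂ * J₁ :=
  reversible_su_no_pm_one_eigenvalue_product_two_involutions_general n hmod T hT hrev heig
end

section
/- Let n ≡ 2 (mod 4) with n > 2 (so n ≥ 6), and let T ∈ SU(n) be a reversible element that cannot be written as a product of two involutions in SU(n). Then T can be written as a product of three involutions in SU(n); that is, there exist I₁, I₂, I₃ ∈ SU(n) with I₁² = I₂² = I₃² = 1 and T = I₁I₂I₃. -/
/-!
A unitary `T` is unitarily diagonalisable, `T = Q · diagonal d · Q*`. Reversibility gives
`charpoly T* = charpoly T⁻¹ = charpoly T`, so the multiset of the `d i` is stable under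
`λ ↦ conj λ = λ⁻¹`, and the indices are matched by an involution `π` with `d i * d (π i) = 1`.

For commuting involutions `ρ₁, ρ₂` and unimodular `c, e` with `c i * c (ρ₁ i) = 1` and
`e i * e (ρ₂ i) = 1`, writing `P ρ` for the permutation matrix,
`diagonal (c * e) = (diagonal c · P ρ₁) · (P ρ₁ · P ρ₂) · (P ρ₂ · diagonal e)`
is a product of three involutions, with determinants `sign ρ₁ · ∏ c`, `sign ρ₁ · sign ρ₂` and
`sign ρ₂ · ∏ e`. Taking `ρ₁ = ρ₂ = π` and `c = 1` handles an even `π`; if `π` fixes some `i₀`,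
setting `c i₀ = -1` corrects the determinants. Otherwise `π` is odd and fixed-point-free, and
since `n > 2` it has two orbits `{a, π a}`, `{a', π a'}`: then `ρ₁ = π · swap a' (π a')` and
`ρ₂ = π · swap a (π a)` are even, and `c = d` on `{a, π a}`, `e = d` off it, have product `1`.
-/

open Equiv Equiv.Perm
open scoped ComplexStarModule Pointwise

theorem Commute.mul_mul_self_eq_one {G : Type*} [Monoid G] {a b : G} (h : Commute a b)
    (ha : a * a = 1) (hb : b * b = 1) : a * b * (a * b) = 1 := by
  rw [h.symm.mul_mul_mul_comm, ha, hb, one_mul]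

theorem Equiv.Perm.commute_swap_of_swap_apply_eq {α : Type*} [DecidableEq α] {π : Perm α}
    {x y : α} (h : swap (π x) (π y) = swap x y) : Commute π (swap x y) := by
  rw [swap_apply_apply] at h
  exact mul_inv_eq_iff_eq_mul.mp h

theorem Equiv.Perm.commute_swap_apply {α : Type*} [DecidableEq α] {π : Perm α} (hπ : π * π = 1)
    (x : α) : Commute π (swap x (π x)) :=
  commute_swap_of_swap_apply_eq (by rw [← Perm.mul_apply, hπ, Perm.one_apply, swap_comm])

theorem Equiv.Perm.apply_mem_pair_iff {α : Type*} [DecidableEq α] {π : Perm α} (hπ : π * π = 1)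
    (x y : α) : π y ∈ ({x, π x} : Finset α) ↔ y ∈ ({x, π x} : Finset α) := by
  have : π y = x ↔ y = π x := by
    rw [← π.injective.eq_iff, ← Perm.mul_apply, hπ, Perm.one_apply]
  simp only [Finset.mem_insert, Finset.mem_singleton, π.injective.eq_iff, this, or_comm]

theorem Finset.exists_perm_mul_self_eq_one_of_map_eq {ι α : Type*} [DecidableEq ι] (f : ι → α)
    {φ : α → α} (hφ : Function.Involutive φ) (s : Finset ι)
    (hs : s.val.map (φ ∘ f) = s.val.map f) :
    ∃ π : Perm ι, π * π = 1 ∧ (∀ i ∈ s, f (π i) = φ (f i)) ∧ ∀ i ∉ s, π i = i := by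
  induction s using Finset.strongInduction with
  | H s ih =>
  rcases s.eq_empty_or_nonempty with rfl | ⟨a, ha⟩
  · exact ⟨1, mul_one 1, by simp, fun _ _ => rfl⟩
  obtain ⟨b, hb, hfb⟩ : ∃ b ∈ s, f b = φ (f a) := by
    simpa using (hs ▸ Multiset.mem_map_of_mem (φ ∘ f) ha : φ (f a) ∈ s.val.map f)
  have hab : {a, b} ⊆ s := Finset.insert_subset ha (Finset.singleton_subset_iff.2 hb)
  have hpair : ({a, b} : Finset ι).val.map (φ ∘ f) = ({a, b} : Finset ι).val.map f := by
    rcases eq_or_ne a b with rfl | hne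
    · simp [← hfb]
    · rw [Finset.insert_val_of_notMem (Finset.notMem_singleton.2 hne)]
      simpa [hfb, hφ (f a)] using Multiset.pair_comm _ _
  have hsplit : s.val = (s \ {a, b}).val + ({a, b} : Finset ι).val := by
    rw [Finset.sdiff_val, tsub_add_cancel_of_le (Finset.val_le_iff.2 hab)]
  obtain ⟨π, hπ, hπs, hπout⟩ := ih _ (Finset.sdiff_ssubset hab (by simp))
    (by rw [hsplit, Multiset.map_add, Multiset.map_add, hpair] at hs; exact add_right_cancel hs)
  have hπa : π a = a := hπout a (by simp)
  have hπb : π b = b := hπout b (by simp)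
  have hπ_of_ne (i : ι) (hia : i ≠ a) (hib : i ≠ b) : (swap a b * π) i = π i :=
    swap_apply_of_ne_of_ne (fun h => hia (π.injective (h.trans hπa.symm)))
      (fun h => hib (π.injective (h.trans hπb.symm)))
  refine ⟨swap a b * π, ?_, fun i hi => ?_, fun i hi => ?_⟩
  · exact (commute_swap_of_swap_apply_eq (by rw [hπa, hπb])).symm.mul_mul_self_eq_one
      (swap_mul_self a b) hπ
  · rcases eq_or_ne i a with rfl | hia
    · simp [hπa, hfb]
    rcases eq_or_ne i b with rfl | hib
    · simp [hπb, hfb, hφ (f a)]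
    rw [hπ_of_ne i hia hib]
    exact hπs i (by simp [hi, hia, hib])
  · have hia : i ≠ a := fun h => hi (h ▸ ha)
    have hib : i ≠ b := fun h => hi (h ▸ hb)
    rw [hπ_of_ne i hia hib, hπout i (by simp [hi])]

theorem Set.mulIndicator_mul_mulIndicator_mul_apply_eq_one {ι M : Type*} [CommMonoid M]
    {s : Set ι} {π σ : Perm ι} {d : ι → M} (hπs : ∀ i, π i ∈ s ↔ i ∈ s) (hσ : σ * σ = 1)
    (hσs : ∀ i ∈ s, σ i = i) (hd : ∀ i ∈ s, d i * d (π i) = 1) (i : ι) :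
    s.mulIndicator d i * s.mulIndicator d ((π * σ) i) = 1 := by
  by_cases hi : i ∈ s
  · rw [Perm.mul_apply, hσs i hi, mulIndicator_of_mem hi, mulIndicator_of_mem ((hπs i).2 hi),
      hd i hi]
  · have hσi : σ i ∉ s := fun h => by
      have h' : σ (σ i) = i := by rw [← Perm.mul_apply, hσ, Perm.one_apply]
      rw [hσs _ h] at h'
      exact hi (h' ▸ h)
    rw [mulIndicator_of_notMem hi, Perm.mul_apply, mulIndicator_of_notMem (mt (hπs _).1 hσi),
      one_mul]

theorem Set.mulIndicator_apply_mem {ι M : Type*} [Monoid M] {S : Submonoid M} {d : ι → M}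
    (hd : ∀ i, d i ∈ S) (s : Set ι) (i : ι) : s.mulIndicator d i ∈ S := by
  by_cases hi : i ∈ s
  · rw [mulIndicator_of_mem hi]
    exact hd i
  · rw [mulIndicator_of_notMem hi]
    exact one_mem S

theorem ContinuousLinearMap.exists_orthonormalBasis_apply_eq_smul {E : Type*}
    [NormedAddCommGroup E] [InnerProductSpace ℂ E] [FiniteDimensional ℂ E] {m : ℕ}
    (hm : Module.finrank ℂ E = m) (S : E →L[ℂ] E) [IsStarNormal S] :
    ∃ (b : OrthonormalBasis (Fin m) ℂ E) (d : Fin m → ℂ), ∀ i, S (b i) = d i • b i := by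
  classical
  -- `S = ℜ S + I • ℑ S`, and the commuting self-adjoint parts are simultaneously diagonalisable.
  have hA := (ℜ S).2.isSymmetric
  have hB := (ℑ S).2.isSymmetric
  have hint := LinearMap.IsSymmetric.directSum_isInternal_of_commute hA hB
    (congrArg ContinuousLinearMap.toLinearMap (Commute.realPart_imaginaryPart S).eq)
  have hfam := LinearMap.IsSymmetric.orthogonalFamily_eigenspace_inf_eigenspace hA hB
  set V : ℂ × ℂ → Submodule ℂ E :=
    fun p => Module.End.eigenspace _ p.2 ⊓ Module.End.eigenspace _ p.1
  have := hint.submodule_iSupIndep.fintypeNeBotOfFiniteDimensional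
  replace hint := DirectSum.isInternal_ne_bot_iff.mpr hint
  replace hfam := hfam.comp (Subtype.coe_injective (p := fun p => V p ≠ ⊥))
  refine ⟨hint.subordinateOrthonormalBasis hm hfam, fun i =>
    let p := (hint.subordinateOrthonormalBasisIndex hm i hfam).1; p.2 + Complex.I * p.1,
    fun i => ?_⟩
  obtain ⟨hvA, hvB⟩ :=
    Submodule.mem_inf.mp (hint.subordinateOrthonormalBasis_subordinate hm i hfam)
  rw [Module.End.mem_eigenspace_iff, ContinuousLinearMap.coe_coe] at hvA hvB
  conv_lhs => rw [← realPart_add_I_smul_imaginaryPart S]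
  rw [add_apply, smul_apply, hvA, hvB, add_smul, mul_smul]

open Matrix

namespace Matrix

variable {ι : Type*} [Fintype ι] [DecidableEq ι]

theorem exists_mem_unitaryGroup_eq_mul_diagonal_mul_star (T : Matrix ι ι ℂ) [hT : IsStarNormal T] :
    ∃ Q ∈ unitaryGroup ι ℂ, ∃ d : ι → ℂ, T = Q * diagonal d * star Q := by
  have : IsStarNormal (toEuclideanCLM (𝕜 := ℂ) T) := hT.map (toEuclideanCLM (𝕜 := ℂ) (n := ι))
  have hm : Module.finrank ℂ (EuclideanSpace ℂ ι) = Fintype.card ι := finrank_euclideanSpace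
  obtain ⟨b, d, hb⟩ := (toEuclideanCLM (𝕜 := ℂ) T).exists_orthonormalBasis_apply_eq_smul hm
  let b' := b.reindex (Fintype.equivFin ι).symm
  have hb' (j : ι) : T *ᵥ b' j = d (Fintype.equivFin ι j) • b' j := by
    simpa [b'] using congr(($(hb (Fintype.equivFin ι j))).ofLp)
  let Q := (EuclideanSpace.basisFun ι ℂ).toBasis.toMatrix b'
  have hQ : Q ∈ unitaryGroup ι ℂ :=
    (EuclideanSpace.basisFun ι ℂ).toMatrix_orthonormalBasis_mem_unitary b'
  have hTQ : T * Q = Q * diagonal (d ∘ Fintype.equivFin ι) := by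
    ext i j
    rw [mul_diagonal]
    simpa [Q, mul_apply, Module.Basis.toMatrix_apply, mulVec, dotProduct, mul_comm]
      using congrFun (hb' j) i
  exact ⟨Q, hQ, d ∘ Fintype.equivFin ι, by
    rw [← hTQ, mul_assoc, Unitary.mul_star_self_of_mem hQ, mul_one]⟩

theorem charpoly_mul_mul_star {R : Type*} [CommRing R] [StarRing R] {Q : Matrix ι ι R}
    (hQ : Q ∈ unitaryGroup ι R) (A : Matrix ι ι R) : (Q * A * star Q).charpoly = A.charpoly := by
  rw [mul_assoc, charpoly_mul_comm, mul_assoc, Unitary.star_mul_self_of_mem hQ, mul_one]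

theorem charpoly_star_eq_of_mul_mul_inv_eq_inv {R : Type*} [CommRing R] [StarRing R]
    {T g : Matrix ι ι R} (hT : T ∈ unitaryGroup ι R) (hg : g ∈ unitaryGroup ι R)
    (h : g * T * g⁻¹ = T⁻¹) : (star T).charpoly = T.charpoly := by
  rw [← inv_eq_left_inv (Unitary.star_mul_self_of_mem hT), ← h,
    inv_eq_left_inv (Unitary.star_mul_self_of_mem hg), charpoly_mul_mul_star hg]

theorem roots_charpoly_diagonal {R : Type*} [CommRing R] [IsDomain R] (d : ι → R) :
    (diagonal d).charpoly.roots = Finset.univ.val.map d := by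
  rw [charpoly_diagonal, Polynomial.roots_prod _ _ (by
    simp [Finset.prod_ne_zero_iff, Polynomial.X_sub_C_ne_zero])]
  simp

theorem exists_perm_of_charpoly_diagonal_star_eq {d : ι → ℂ} (hd : ∀ i, d i ∈ unitary ℂ)
    (h : (diagonal (star d)).charpoly = (diagonal d).charpoly) :
    ∃ π : Perm ι, π * π = 1 ∧ ∀ i, d i * d (π i) = 1 := by
  have hmap : Finset.univ.val.map (star ∘ d) = Finset.univ.val.map d := by
    simpa [roots_charpoly_diagonal] using congrArg Polynomial.roots h
  obtain ⟨π, hπ, hπd, -⟩ :=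
    Finset.exists_perm_mul_self_eq_one_of_map_eq d star_involutive _ hmap
  exact ⟨π, hπ, fun i => by
    rw [hπd i (Finset.mem_univ i)]
    exact Unitary.mul_star_self_of_mem (hd i)⟩

theorem diagonal_mem_unitaryGroup_iff {d : ι → ℂ} :
    diagonal d ∈ unitaryGroup ι ℂ ↔ ∀ i, d i ∈ unitary ℂ := by
  simp only [mem_unitaryGroup_iff', star_eq_conjTranspose, diagonal_conjTranspose,
    diagonal_mul_diagonal, Unitary.mem_iff_star_mul_self, ← diagonal_one,
    diagonal_injective.eq_iff, funext_iff, Pi.star_apply]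

theorem permMatrix_mem_unitaryGroup_s5 {R : Type*} [CommRing R] [StarRing R] (ρ : Perm ι) :
    ρ.permMatrix R ∈ unitaryGroup ι R := by
  rw [mem_unitaryGroup_iff', star_eq_conjTranspose, conjTranspose_permMatrix, ← permMatrix_mul,
    mul_inv_cancel, permMatrix_one]

theorem permMatrix_mul_diagonal {R : Type*} [CommRing R] (ρ : Perm ι) (c : ι → R) :
    ρ.permMatrix R * diagonal c = diagonal (c ∘ ρ) * ρ.permMatrix R := by
  rw [PEquiv.toMatrix_toPEquiv_mul, PEquiv.mul_toMatrix_toPEquiv]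
  ext i j
  simp [diagonal_apply, Equiv.eq_symm_apply]

theorem mul_mul_star_mem_specialUnitaryGroup {Q A : Matrix ι ι ℂ} (hQ : Q ∈ unitaryGroup ι ℂ)
    (hA : A ∈ specialUnitaryGroup ι ℂ) : Q * A * star Q ∈ specialUnitaryGroup ι ℂ := by
  obtain ⟨hAu, hAdet⟩ := mem_specialUnitaryGroup_iff.mp hA
  refine mem_specialUnitaryGroup_iff.mpr ⟨mul_mem (mul_mem hQ hAu) (Unitary.star_mem hQ), ?_⟩
  rw [det_mul, det_mul, hAdet, mul_one, ← det_mul, Unitary.mul_star_self_of_mem hQ, det_one]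

def specialUnitaryInvolutions (ι : Type*) [Fintype ι] [DecidableEq ι] : Set (Matrix ι ι ℂ) :=
  {A | A ∈ specialUnitaryGroup ι ℂ ∧ A * A = 1}

theorem mul_mul_star_mem_specialUnitaryInvolutions_mul_mul {Q A : Matrix ι ι ℂ}
    (hQ : Q ∈ unitaryGroup ι ℂ)
    (hA : A ∈ specialUnitaryInvolutions ι * specialUnitaryInvolutions ι *
      specialUnitaryInvolutions ι) :
    Q * A * star Q ∈ specialUnitaryInvolutions ι * specialUnitaryInvolutions ι *
      specialUnitaryInvolutions ι := by
  let φ := Unitary.conjStarAlgAut ℂ (Matrix ι ι ℂ) ⟨Q, hQ⟩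
  have hφ (B : Matrix ι ι ℂ) : φ B = Q * B * star Q := rfl
  have hmem {B : Matrix ι ι ℂ} (hB : B ∈ specialUnitaryInvolutions ι) :
      φ B ∈ specialUnitaryInvolutions ι :=
    ⟨mul_mul_star_mem_specialUnitaryGroup hQ hB.1, by rw [← map_mul, hB.2, map_one]⟩
  obtain ⟨_, ⟨I₁, h₁, I₂, h₂, rfl⟩, I₃, h₃, rfl⟩ := hA
  exact ⟨_, ⟨_, hmem h₁, _, hmem h₂, rfl⟩, _, hmem h₃, by simp only [← hφ, map_mul]⟩

theorem diagonal_mul_permMatrix_mem_specialUnitaryInvolutions {ρ : Perm ι} (hρ : ρ * ρ = 1)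
    {c : ι → ℂ} (hcu : ∀ i, c i ∈ unitary ℂ) (hc : ∀ i, c i * c (ρ i) = 1)
    (hdet : (sign ρ : ℂ) * ∏ i, c i = 1) :
    diagonal c * ρ.permMatrix ℂ ∈ specialUnitaryInvolutions ι := by
  refine ⟨mem_specialUnitaryGroup_iff.2 ⟨mul_mem (diagonal_mem_unitaryGroup_iff.2 hcu)
    (permMatrix_mem_unitaryGroup_s5 ρ), ?_⟩, ?_⟩
  · rw [det_mul, det_diagonal, det_permutation, mul_comm]
    exact hdet
  · rw [mul_assoc, ← mul_assoc (ρ.permMatrix ℂ), permMatrix_mul_diagonal, mul_assoc,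
      ← permMatrix_mul, hρ, permMatrix_one, mul_one, diagonal_mul_diagonal, ← diagonal_one]
    exact congrArg diagonal (funext hc)

theorem diagonal_mul_mem_specialUnitaryInvolutions_mul_mul {ρ₁ ρ₂ : Perm ι}
    (hcomm : Commute ρ₁ ρ₂) (hρ₁ : ρ₁ * ρ₁ = 1) (hρ₂ : ρ₂ * ρ₂ = 1) (hsign : sign ρ₁ = sign ρ₂)
    {c e : ι → ℂ} (hcu : ∀ i, c i ∈ unitary ℂ) (heu : ∀ i, e i ∈ unitary ℂ)
    (hc : ∀ i, c i * c (ρ₁ i) = 1) (he : ∀ i, e i * e (ρ₂ i) = 1)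
    (hdet₁ : (sign ρ₁ : ℂ) * ∏ i, c i = 1) (hdet₂ : (sign ρ₂ : ℂ) * ∏ i, e i = 1) :
    diagonal (c * e) ∈ specialUnitaryInvolutions ι * specialUnitaryInvolutions ι *
      specialUnitaryInvolutions ι := by
  have hP {ρ : Perm ι} (hρ : ρ * ρ = 1) : ρ.permMatrix ℂ * ρ.permMatrix ℂ = 1 := by
    rw [← permMatrix_mul, hρ, permMatrix_one]
  have h₂ : (ρ₂ * ρ₁).permMatrix ℂ ∈ specialUnitaryInvolutions ι := by
    have := diagonal_mul_permMatrix_mem_specialUnitaryInvolutions (c := fun _ => 1)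
      (hcomm.symm.mul_mul_self_eq_one hρ₂ hρ₁) (fun _ => one_mem _) (fun _ => one_mul 1)
      (by simp [hsign])
    rwa [diagonal_one, one_mul] at this
  have h₃ : ρ₂.permMatrix ℂ * diagonal e ∈ specialUnitaryInvolutions ι := by
    rw [permMatrix_mul_diagonal]
    refine diagonal_mul_permMatrix_mem_specialUnitaryInvolutions hρ₂ (fun i => heu _)
      (fun i => he (ρ₂ i)) ?_
    rwa [Fintype.prod_equiv ρ₂ (e ∘ ρ₂) e (fun _ => rfl)]
  refine ⟨_, ⟨_, diagonal_mul_permMatrix_mem_specialUnitaryInvolutions hρ₁ hcu hc hdet₁, _, h₂,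
    rfl⟩, _, h₃, ?_⟩
  change diagonal c * _ * (ρ₂ * ρ₁).permMatrix ℂ * (_ * diagonal e) = _
  simp only [permMatrix_mul, mul_assoc]
  rw [← mul_assoc (ρ₁.permMatrix ℂ), hP hρ₁, one_mul, ← mul_assoc (ρ₂.permMatrix ℂ), hP hρ₂,
    one_mul, diagonal_mul_diagonal]
  rfl

theorem diagonal_mem_specialUnitaryInvolutions_mul_mul_of_sign_eq_neg_one {d : ι → ℂ}
    (hdu : ∀ i, d i ∈ unitary ℂ) (hdet : ∏ i, d i = 1) {π : Perm ι} (hπ : π * π = 1)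
    (hπd : ∀ i, d i * d (π i) = 1) (hsign : sign π = -1) {a a' : ι} (ha : π a ≠ a)
    (ha' : π a' ≠ a') (ha's : a' ∉ ({a, π a} : Finset ι)) :
    diagonal d ∈ specialUnitaryInvolutions ι * specialUnitaryInvolutions ι *
      specialUnitaryInvolutions ι := by
  set s : Finset ι := {a, π a}
  have hπs : ∀ i, π i ∈ s ↔ i ∈ s := apply_mem_pair_iff hπ a
  set σ := Equiv.swap a (π a)
  set σ' := Equiv.swap a' (π a')
  have hσ (i : ι) (hi : i ∉ s) : σ i = i :=
    swap_apply_of_ne_of_ne (fun h => hi (by simp [s, h])) (fun h => hi (by simp [s, h]))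
  have hσ' (i : ι) (hi : i ∈ s) : σ' i = i :=
    swap_apply_of_ne_of_ne (fun h => ha's (h ▸ hi)) (fun h => (hπs a').not.2 ha's (h ▸ hi))
  have hσσ' : Commute σ' σ :=
    commute_swap_of_swap_apply_eq (by rw [hσ' a (by simp [s]), hσ' (π a) (by simp [s])])
  have hsign_mul {x y : ι} (hxy : x ≠ y) : sign (π * Equiv.swap x y) = 1 := by
    rw [Perm.sign_mul, hsign, sign_swap hxy]
    rfl
  have hprod : ∏ i, (↑s : Set ι).mulIndicator d i = 1 := by
    rw [Finset.prod_mulIndicator_subset d (Finset.subset_univ s), Finset.prod_pair ha.symm,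
      hπd]
  have hprod' : ∏ i, (↑s : Set ι)ᶜ.mulIndicator d i = 1 := by
    calc _ = (∏ i, (↑s : Set ι).mulIndicator d i) * ∏ i, (↑s : Set ι)ᶜ.mulIndicator d i := by
          rw [hprod, one_mul]
      _ = 1 := by simp_rw [← Finset.prod_mul_distrib, Set.mulIndicator_self_mul_compl_apply, hdet]
  rw [← Set.mulIndicator_self_mul_compl (↑s) d]
  exact diagonal_mul_mem_specialUnitaryInvolutions_mul_mul (ρ₁ := π * σ') (ρ₂ := π * σ)
    (((Commute.refl π).mul_right (commute_swap_apply hπ a)).mul_left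
      ((commute_swap_apply hπ a').symm.mul_right hσσ'))
    ((commute_swap_apply hπ a').mul_mul_self_eq_one hπ (Equiv.swap_mul_self _ _))
    ((commute_swap_apply hπ a).mul_mul_self_eq_one hπ (Equiv.swap_mul_self _ _))
    (by rw [hsign_mul ha'.symm, hsign_mul ha.symm])
    (Set.mulIndicator_apply_mem hdu _) (Set.mulIndicator_apply_mem hdu _)
    (Set.mulIndicator_mul_mulIndicator_mul_apply_eq_one hπs
      (Equiv.swap_mul_self _ _) hσ' fun i _ => hπd i)
    (Set.mulIndicator_mul_mulIndicator_mul_apply_eq_one (fun i => (hπs i).not)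
      (Equiv.swap_mul_self _ _) hσ fun i _ => hπd i)
    (by rw [hsign_mul ha'.symm, hprod]; simp) (by rw [hsign_mul ha.symm, hprod']; simp)

theorem diagonal_mem_specialUnitaryInvolutions_mul_mul (hcard : 2 < Fintype.card ι) {d : ι → ℂ}
    (hd : diagonal d ∈ specialUnitaryGroup ι ℂ) {π : Perm ι} (hπ : π * π = 1)
    (hπd : ∀ i, d i * d (π i) = 1) :
    diagonal d ∈ specialUnitaryInvolutions ι * specialUnitaryInvolutions ι *
      specialUnitaryInvolutions ι := by
  obtain ⟨hdu, hdet⟩ := mem_specialUnitaryGroup_iff.mp hd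
  rw [diagonal_mem_unitaryGroup_iff] at hdu
  rw [det_diagonal] at hdet
  rcases Int.units_eq_one_or (sign π) with hsign | hsign
  · simpa using diagonal_mul_mem_specialUnitaryInvolutions_mul_mul (Commute.refl π) hπ hπ rfl
      (c := 1) (fun _ => one_mem _) hdu (fun _ => one_mul 1) hπd (by simp [hsign])
      (by simp [hsign, hdet])
  by_cases hfix : ∃ i₀, π i₀ = i₀
  · obtain ⟨i₀, hi₀⟩ := hfix
    set c : ι → ℂ := Pi.mulSingle i₀ (-1)
    have hcc (i : ι) : c i * c i = 1 := by
      by_cases h : i = i₀ <;> simp [c, h]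
    have hc (i : ι) : c i * c (π i) = 1 := by
      by_cases h : i = i₀
      · rw [h, hi₀, hcc]
      · have : π i ≠ i₀ := fun h' => h (π.injective (h'.trans hi₀.symm))
        simp [c, h, this]
    have hcu (i : ι) : c i ∈ unitary ℂ := by
      rw [Unitary.mem_iff_star_mul_self]
      by_cases h : i = i₀ <;> simp [c, h]
    have hprod : ∏ i, c i = -1 := by simp [c]
    have hd' : d = c * (c * d) := funext fun i => by
      rw [Pi.mul_apply, Pi.mul_apply, ← mul_assoc, hcc, one_mul]
    rw [hd']
    exact diagonal_mul_mem_specialUnitaryInvolutions_mul_mul (Commute.refl π) hπ hπ rfl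
      hcu (fun i => mul_mem (hcu i) (hdu i)) hc
      (fun i => by rw [Pi.mul_apply, Pi.mul_apply, mul_mul_mul_comm, hc, hπd, one_mul])
      (by simp [hsign, hprod]) (by simp [Finset.prod_mul_distrib, hsign, hprod, hdet])
  · obtain ⟨a⟩ : Nonempty ι := Fintype.card_pos_iff.mp (by omega)
    obtain ⟨a', -, ha's⟩ := Finset.exists_mem_notMem_of_card_lt_card
      (s := {a, π a}) (t := Finset.univ) (Finset.card_le_two.trans_lt (by simpa using hcard))
    exact diagonal_mem_specialUnitaryInvolutions_mul_mul_of_sign_eq_neg_one hdu hdet hπ hπd hsign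
      (fun h => hfix ⟨a, h⟩) (fun h => hfix ⟨a', h⟩) ha's

end Matrix

theorem reversible_su_not_strongly_reversible_product_three_involutions_general
    (n : ℕ) (hn : 2 < n)
    (T : Matrix (Fin n) (Fin n) ℂ)
    (hT : T ∈ Matrix.specialUnitaryGroup (Fin n) ℂ)
    (hrev : ∃ g : Matrix (Fin n) (Fin n) ℂ,
      g ∈ Matrix.unitaryGroup (Fin n) ℂ ∧ g * T * g⁻¹ = T⁻¹) :
    ∃ I₁ I₂ I₃ : Matrix (Fin n) (Fin n) ℂ,
      I₁ ∈ Matrix.specialUnitaryGroup (Fin n) ℂ ∧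
      I₂ ∈ Matrix.specialUnitaryGroup (Fin n) ℂ ∧
      I₃ ∈ Matrix.specialUnitaryGroup (Fin n) ℂ ∧
      I₁ * I₁ = 1 ∧ I₂ * I₂ = 1 ∧ I₃ * I₃ = 1 ∧
      T = I₁ * I₂ * I₃ := by
  obtain ⟨g, hg, hgT⟩ := hrev
  have hTu := (mem_specialUnitaryGroup_iff.mp hT).1
  have := isStarNormal_of_mem_unitary hTu
  obtain ⟨Q, hQ, d, rfl⟩ := exists_mem_unitaryGroup_eq_mul_diagonal_mul_star T
  have hD : diagonal d ∈ specialUnitaryGroup (Fin n) ℂ := by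
    have := mul_mul_star_mem_specialUnitaryGroup (Unitary.star_mem hQ) hT
    rwa [star_star, ← mul_assoc, ← mul_assoc, Unitary.star_mul_self_of_mem hQ, one_mul,
      mul_assoc, Unitary.star_mul_self_of_mem hQ, mul_one] at this
  have hcp := charpoly_star_eq_of_mul_mul_inv_eq_inv hTu hg hgT
  rw [star_mul, star_mul, star_star, ← mul_assoc, star_eq_conjTranspose (diagonal d),
    diagonal_conjTranspose, charpoly_mul_mul_star hQ, charpoly_mul_mul_star hQ] at hcp
  obtain ⟨π, hπ, hπd⟩ := exists_perm_of_charpoly_diagonal_star_eq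
    (diagonal_mem_unitaryGroup_iff.mp (mem_specialUnitaryGroup_iff.mp hD).1) hcp
  obtain ⟨_, ⟨I₁, h₁, I₂, h₂, rfl⟩, I₃, h₃, hI⟩ :=
    mul_mul_star_mem_specialUnitaryInvolutions_mul_mul hQ
      (diagonal_mem_specialUnitaryInvolutions_mul_mul (by simpa using hn) hD hπ hπd)
  exact ⟨I₁, I₂, I₃, h₁.1, h₂.1, h₃.1, h₁.2, h₂.2, h₃.2, hI.symm⟩

/-- If `n ≡ 2 (mod 4)`, `n > 2`, and `T ∈ SU(n)` is reversible but is not a product of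
two involutions in `SU(n)`, then `T` is a product of three involutions in `SU(n)`. -/
theorem reversible_su_not_strongly_reversible_product_three_involutions
    (n : ℕ) (hn : 2 < n) (hmod : n % 4 = 2)
    (T : Matrix (Fin n) (Fin n) ℂ)
    (hT : T ∈ Matrix.specialUnitaryGroup (Fin n) ℂ)
    (hrev : ∃ g : Matrix (Fin n) (Fin n) ℂ,
      g ∈ Matrix.unitaryGroup (Fin n) ℂ ∧ g * T * g⁻¹ = T⁻¹)
    (hnot : ¬ ∃ J₁ J₂ : Matrix (Fin n) (Fin n) ℂ,
      J₁ ∈ Matrix.specialUnitaryGroup (Fin n) ℂ ∧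
      J₂ ∈ Matrix.specialUnitaryGroup (Fin n) ℂ ∧
      J₁ * J₁ = 1 ∧ J₂ * J₂ = 1 ∧ T = J₁ * J₂) :
    ∃ I₁ I₂ I₃ : Matrix (Fin n) (Fin n) ℂ,
      I₁ ∈ Matrix.specialUnitaryGroup (Fin n) ℂ ∧
      I₂ ∈ Matrix.specialUnitaryGroup (Fin n) ℂ ∧
      I₃ ∈ Matrix.specialUnitaryGroup (Fin n) ℂ ∧
      I₁ * I₁ = 1 ∧ I₂ * I₂ = 1 ∧ I₃ * I₃ = 1 ∧
      T = I₁ * I₂ * I₃ :=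
  reversible_su_not_strongly_reversible_product_three_involutions_general n hn T hT hrev
end

section
/- Let n ≥ 2 and let T ∈ U(n,1) be a vertical translation, i.e., a unipotent element with (T − 1)² = 0 and T ≠ 1. Then T is a product of four involutions in U(n,1); that is, there exist involutions J₁, J₂, J₃, J₄ ∈ U(n,1) with T = J₁J₂J₃J₄. -/
open Matrix

/-- The signature matrix `J = diag(-1, 1, …, 1)` of the Hermitian form on `ℂ^{n,1}`. -/
noncomputable def Jform (n : ℕ) : Matrix (Fin (n + 1)) (Fin (n + 1)) ℂ :=
  Matrix.diagonal (fun i => if i = 0 then (-1 : ℂ) else 1)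

/-- Membership in `U(n,1)`: `Aᴴ J A = J`. -/
def memU1 (n : ℕ) (A : Matrix (Fin (n + 1)) (Fin (n + 1)) ℂ) : Prop :=
  Aᴴ * Jform n * A = Jform n

/-- Membership in `SU(n,1)`: `Aᴴ J A = J` and `det A = 1`. -/
def memSU1 (n : ℕ) (A : Matrix (Fin (n + 1)) (Fin (n + 1)) ℂ) : Prop :=
  Aᴴ * Jform n * A = Jform n ∧ A.det = 1


/-!
Write `⟨x, y⟩ = xᴴ J y`. If `T = 1 + N` preserves the form and `N² = 0`, then `NᴴJ = -JN`, so the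
columns of `N` are mutually orthogonal null vectors. In signature `(n, 1)` such vectors are
proportional, which forces `N = μ v ⟨v, ·⟩` with `v` null and `μ` purely imaginary. As `n ≥ 2`,
there is a unit vector `r` orthogonal to `v`; then every `r - α v` is a unit vector, and the
reflection `R_α = 1 - 2 (r - α v) ⟨r - α v, ·⟩` is an involution in `U(n,1)`. All these matrices
lie in the algebra spanned by `1` and the operators `x ⟨y, ·⟩` for `x, y ∈ {v, r}`, where a direct
computation gives `T = R_1 R_{1-μ/4} R_{-μ/4} R_0`.
-/

open ComplexOrder

namespace HermitianForm

section RankOne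

variable {m K : Type*} [Field K]

lemma exists_eq_smul_of_vecMulVec_eq {x x' y y' : m → K} (h : vecMulVec x y = vecMulVec x' y')
    (hx : x ≠ 0) : ∃ μ : K, y = μ • y' := by
  obtain ⟨i, hi⟩ := Function.ne_iff.mp hx
  rw [Pi.zero_apply] at hi
  refine ⟨x' i / x i, funext fun j => ?_⟩
  have hij := congrFun (congrFun h i) j
  rw [vecMulVec_apply, vecMulVec_apply] at hij
  rw [Pi.smul_apply, smul_eq_mul, div_mul_eq_mul_div, eq_div_iff hi]
  linear_combination hij

lemma exists_eq_smul_star_of_vecMulVec_skew [StarRing K] {w c : m → K} (hw : w ≠ 0)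
    (hskew : (vecMulVec w c)ᴴ = -vecMulVec w c) :
    ∃ μ : K, star μ = -μ ∧ c = μ • star w := by
  have h : vecMulVec w c = vecMulVec (-star c) (star w) := by
    rw [neg_vecMulVec, ← conjTranspose_vecMulVec, hskew, neg_neg]
  obtain ⟨μ, hc⟩ := exists_eq_smul_of_vecMulVec_eq h hw
  refine ⟨μ, ?_, hc⟩
  obtain ⟨i, hi⟩ := Function.ne_iff.mp hw
  have hii := congrFun (congrFun hskew i) i
  simp only [hc, conjTranspose_apply, Matrix.neg_apply, vecMulVec_apply, Pi.star_apply,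
    Pi.smul_apply, smul_eq_mul, star_mul', star_star] at hii
  apply mul_right_cancel₀ (mul_ne_zero hi (star_ne_zero.mpr hi))
  linear_combination hii

end RankOne

variable {m : Type*} [Fintype m] (J : Matrix m m ℂ)

def jForm (x y : m → ℂ) : ℂ := star x ⬝ᵥ (J *ᵥ y)

/-- The rank-one operator `z ↦ jForm J y z • x`. -/
def jOuter (x y : m → ℂ) : Matrix m m ℂ := vecMulVec x (star y ᵥ* J)

variable {J}

lemma jForm_smul_left (a : ℂ) (x y : m → ℂ) : jForm J (a • x) y = star a * jForm J x y := by
  rw [jForm, jForm, star_smul, smul_dotProduct, smul_eq_mul]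

lemma jForm_smul_right (b : ℂ) (x y : m → ℂ) : jForm J x (b • y) = b * jForm J x y := by
  rw [jForm, jForm, mulVec_smul, dotProduct_smul, smul_eq_mul]

lemma jForm_sub_smul_sub_smul (x y : m → ℂ) (α : ℂ) :
    jForm J (x - α • y) (x - α • y) =
      jForm J x x - α * jForm J x y - star α * jForm J y x + star α * α * jForm J y y := by
  simp only [jForm, mulVec_sub, mulVec_smul, dotProduct_sub, sub_dotProduct, star_sub, star_smul,
    dotProduct_smul, smul_dotProduct, smul_eq_mul]
  ring

lemma star_jForm (hJ : J.IsHermitian) (x y : m → ℂ) : star (jForm J x y) = jForm J y x := by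
  rw [jForm, jForm, star_dotProduct y, star_mulVec, hJ.eq, ← dotProduct_mulVec]

lemma conjTranspose_mul_mul_apply (A : Matrix m m ℂ) (i j : m) :
    (Aᴴ * J * A) i j = jForm J (Aᵀ i) (Aᵀ j) := by
  simp only [jForm, mul_apply, dotProduct, mulVec, conjTranspose_apply, transpose_apply,
    Pi.star_apply, Finset.sum_mul, Finset.mul_sum, mul_assoc]
  exact Finset.sum_comm

lemma exists_smul_jForm_eq_one {w : m → ℂ} (hw : 0 < jForm J w w) :
    ∃ c : ℂ, jForm J (c • w) (c • w) = 1 := by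
  obtain ⟨t, ht, htw⟩ := RCLike.pos_iff_exists_ofReal.mp hw
  refine ⟨((√t)⁻¹ : ℝ), ?_⟩
  rw [jForm_smul_left, jForm_smul_right, ← htw, Complex.star_def, Complex.conj_ofReal]
  have hs : √t ≠ 0 := (Real.sqrt_pos.mpr ht).ne'
  push_cast
  field_simp
  rw [← Complex.ofReal_pow, Real.sq_sqrt ht.le]
  rfl

lemma jOuter_mul_jOuter (x y z w : m → ℂ) :
    jOuter J x y * jOuter J z w = jForm J y z • jOuter J x w := by
  rw [jOuter, jOuter, vecMulVec_mul_vecMulVec, vecMulVec_smul, jForm, dotProduct_mulVec]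
  rfl

lemma conjTranspose_jOuter_mul (hJ : J.IsHermitian) (x y : m → ℂ) :
    (jOuter J x y)ᴴ * J = J * jOuter J y x := by
  rw [jOuter, jOuter, conjTranspose_vecMulVec, star_vecMul, star_star, hJ.eq, vecMulVec_mul,
    mul_vecMulVec]

variable [DecidableEq m]

lemma conjTranspose_sub_one_mul_eq_neg {T : Matrix m m ℂ} (hT : Tᴴ * J * T = J)
    (hN : (T - 1) ^ 2 = 0) : (T - 1)ᴴ * J = -(J * (T - 1)) := by
  have hinv : T * (1 - (T - 1)) = 1 := by
    calc T * (1 - (T - 1)) = 1 - (T - 1) ^ 2 := by noncomm_ring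
      _ = 1 := by rw [hN, sub_zero]
  have hTJ : Tᴴ * J = J * (1 - (T - 1)) := by
    calc Tᴴ * J = Tᴴ * J * (T * (1 - (T - 1))) := by rw [hinv, Matrix.mul_one]
      _ = J * (1 - (T - 1)) := by rw [← Matrix.mul_assoc, hT]
  rw [conjTranspose_sub, conjTranspose_one, Matrix.sub_mul, hTJ]
  noncomm_ring

variable (J) in
def jReflection (u : m → ℂ) : Matrix m m ℂ := 1 - 2 • jOuter J u u

lemma jReflection_mul_self {u : m → ℂ} (hu : jForm J u u = 1) :
    jReflection J u * jReflection J u = 1 := by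
  simp only [jReflection, Matrix.sub_mul, Matrix.mul_sub, Matrix.one_mul, Matrix.mul_one,
    Matrix.smul_mul, Matrix.mul_smul, jOuter_mul_jOuter, hu, one_smul]
  module

lemma conjTranspose_jReflection_mul (hJ : J.IsHermitian) (u : m → ℂ) :
    (jReflection J u)ᴴ * J = J * jReflection J u := by
  simp only [jReflection, conjTranspose_sub, conjTranspose_one, conjTranspose_smul, Matrix.sub_mul,
    Matrix.smul_mul, conjTranspose_jOuter_mul hJ, Matrix.mul_sub, Matrix.mul_smul, Matrix.one_mul,
    Matrix.mul_one, star_ofNat]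

lemma conjTranspose_jReflection_mul_mul (hJ : J.IsHermitian) {u : m → ℂ}
    (hu : jForm J u u = 1) : (jReflection J u)ᴴ * J * jReflection J u = J := by
  rw [conjTranspose_jReflection_mul hJ, Matrix.mul_assoc, jReflection_mul_self hu, Matrix.mul_one]

variable (J) in
def jOuterComb (v r : m → ℂ) (e a b c d : ℂ) : Matrix m m ℂ :=
  e • 1 + a • jOuter J v v + b • jOuter J v r + c • jOuter J r v + d • jOuter J r r

lemma jReflection_sub_smul_eq_jOuterComb (v r : m → ℂ) (α : ℂ) :
    jReflection J (r - α • v) =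
      jOuterComb J v r 1 (-2 * (α * star α)) (2 * α) (2 * star α) (-2) := by
  simp only [jReflection, jOuterComb, jOuter, star_sub, star_smul, sub_vecMul, smul_vecMul,
    vecMulVec_sub, sub_vecMulVec, vecMulVec_smul, smul_vecMulVec]
  module

lemma jOuterComb_mul_jOuterComb {v r : m → ℂ} (hvv : jForm J v v = 0) (hvr : jForm J v r = 0)
    (hrv : jForm J r v = 0) (hrr : jForm J r r = 1) (e a b c d e' a' b' c' d' : ℂ) :
    jOuterComb J v r e a b c d * jOuterComb J v r e' a' b' c' d' =
      jOuterComb J v r (e * e') (e * a' + a * e' + b * c') (e * b' + b * e' + b * d')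
        (e * c' + c * e' + d * c') (e * d' + d * e' + d * d') := by
  simp only [jOuterComb, Matrix.add_mul, Matrix.mul_add, Matrix.smul_mul, Matrix.mul_smul,
    Matrix.one_mul, Matrix.mul_one, jOuter_mul_jOuter, hvv, hvr, hrv, hrr, zero_smul, one_smul,
    smul_smul, smul_zero, add_zero, smul_add]
  module

/-- The products of the first two and of the last two reflections are Heisenberg translations with
opposite horizontal parts. -/
lemma one_add_smul_jOuter_eq_jReflection_mul {v r : m → ℂ} (hvv : jForm J v v = 0)
    (hvr : jForm J v r = 0) (hrv : jForm J r v = 0) (hrr : jForm J r r = 1) {μ : ℂ}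
    (hμ : star μ = -μ) :
    1 + μ • jOuter J v v =
      jReflection J (r - (1 : ℂ) • v) * jReflection J (r - (1 - μ / 4) • v) *
        jReflection J (r - (-(μ / 4)) • v) * jReflection J (r - (0 : ℂ) • v) := by
  simp only [jReflection_sub_smul_eq_jOuterComb, jOuterComb_mul_jOuterComb hvv hvr hrv hrr,
    star_sub, star_neg, star_div₀, star_one, star_zero, star_ofNat, hμ]
  rw [show 1 + μ • jOuter J v v = jOuterComb J v r 1 μ 0 0 0 by simp [jOuterComb]]
  congr 1 <;> ring

end HermitianForm

open HermitianForm

section Signature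

variable {n : ℕ}

lemma Jform_isHermitian (n : ℕ) : (Jform n).IsHermitian :=
  isHermitian_diagonal_of_self_adjoint _ (by ext i; by_cases h : i = 0 <;> simp [h])

lemma Jform_mul_self (n : ℕ) : Jform n * Jform n = 1 := by
  rw [Jform, diagonal_mul_diagonal, ← diagonal_one]
  congr 1
  ext i
  by_cases h : i = 0 <;> simp [h]

lemma Jform_mulVec_of_head_eq_zero {x : Fin (n + 1) → ℂ} (hx : x 0 = 0) :
    Jform n *ᵥ x = x := by
  ext i
  by_cases h : i = 0 <;> simp [Jform, mulVec_diagonal, h, hx]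

lemma eq_zero_of_jForm_self_eq_zero {x : Fin (n + 1) → ℂ} (hxx : jForm (Jform n) x x = 0)
    (hx : x 0 = 0) : x = 0 := by
  rwa [jForm, Jform_mulVec_of_head_eq_zero hx, dotProduct_star_self_eq_zero] at hxx

lemma exists_eq_smul_of_isotropic {x y : Fin (n + 1) → ℂ} (hxx : jForm (Jform n) x x = 0)
    (hyy : jForm (Jform n) y y = 0) (hxy : jForm (Jform n) x y = 0) (hx : x ≠ 0) :
    ∃ c : ℂ, y = c • x := by
  have hx0 : x 0 ≠ 0 := fun h => hx (eq_zero_of_jForm_self_eq_zero hxx h)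
  have hyx : jForm (Jform n) y x = 0 := by
    rw [← star_jForm (Jform_isHermitian n), hxy, star_zero]
  refine ⟨y 0 / x 0, sub_eq_zero.mp (eq_zero_of_jForm_self_eq_zero ?_ ?_)⟩
  · rw [jForm_sub_smul_sub_smul, hxx, hyy, hxy, hyx]
    ring
  · simp [hx0]

lemma exists_eq_vecMulVec_of_isotropic {N : Matrix (Fin (n + 1)) (Fin (n + 1)) ℂ}
    (hN : Nᴴ * Jform n * N = 0) (hN0 : N ≠ 0) :
    ∃ v c : Fin (n + 1) → ℂ, v ≠ 0 ∧ jForm (Jform n) v v = 0 ∧ N = vecMulVec v c := by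
  obtain ⟨j₀, hj₀⟩ := Function.ne_iff.mp (transpose_eq_zero.not.mpr hN0)
  have horth : ∀ i j, jForm (Jform n) (Nᵀ i) (Nᵀ j) = 0 := fun i j => by
    rw [← conjTranspose_mul_mul_apply, hN, Matrix.zero_apply]
  choose c hc using fun j => exists_eq_smul_of_isotropic (horth j₀ j₀) (horth j j) (horth j₀ j) hj₀
  refine ⟨Nᵀ j₀, c, hj₀, horth j₀ j₀, ext fun i j => ?_⟩
  rw [vecMulVec_apply, mul_comm, ← transpose_apply N j i, hc j]
  rfl

lemma exists_unit_jOrthogonal (hn : 2 ≤ n) (v : Fin (n + 1) → ℂ) :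
    ∃ r, jForm (Jform n) r r = 1 ∧ jForm (Jform n) v r = 0 := by
  -- `w 0 = 0` and `jForm v w = 0` are two linear conditions in dimension `n + 1 ≥ 3`.
  let A : Matrix (Fin 2) (Fin (n + 1)) ℂ := of ![Pi.single 0 1, star v ᵥ* Jform n]
  obtain ⟨w, hw, hw0⟩ := (Submodule.ne_bot_iff _).mp
    (LinearMap.ker_ne_bot_of_finrank_lt (f := A.mulVecLin) (by simp; omega))
  have hA := LinearMap.mem_ker.mp hw
  have hw₀ : w 0 = 0 := by simpa [A] using congrFun hA 0
  have hvw : jForm (Jform n) v w = 0 := by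
    simpa [A, jForm, dotProduct_mulVec] using congrFun hA 1
  have hpos : 0 < jForm (Jform n) w w := by
    rw [jForm, Jform_mulVec_of_head_eq_zero hw₀]
    exact dotProduct_star_self_pos_iff.mpr hw0
  obtain ⟨c, hc⟩ := exists_smul_jForm_eq_one hpos
  exact ⟨c • w, hc, by rw [jForm_smul_right, hvw, mul_zero]⟩

lemma exists_isotropic_eq_one_add_smul_jOuter {T : Matrix (Fin (n + 1)) (Fin (n + 1)) ℂ}
    (hT : memU1 n T) (hunip : (T - 1) ^ 2 = 0) (hne : T ≠ 1) :
    ∃ (v : Fin (n + 1) → ℂ) (μ : ℂ),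
      jForm (Jform n) v v = 0 ∧ star μ = -μ ∧ T = 1 + μ • jOuter (Jform n) v v := by
  have hskew : (T - 1)ᴴ * Jform n = -(Jform n * (T - 1)) :=
    conjTranspose_sub_one_mul_eq_neg hT hunip
  have hiso : (T - 1)ᴴ * Jform n * (T - 1) = 0 := by
    rw [hskew, Matrix.neg_mul, Matrix.mul_assoc, ← sq, hunip, Matrix.mul_zero, neg_zero]
  obtain ⟨v, c, hv, hvv, hN⟩ := exists_eq_vecMulVec_of_isotropic hiso (sub_ne_zero.mpr hne)
  have hJv : Jform n *ᵥ v ≠ 0 := fun h => hv <| by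
    rw [← one_mulVec v, ← Jform_mul_self n, ← mulVec_mulVec, h, mulVec_zero]
  have hK : (vecMulVec (Jform n *ᵥ v) c)ᴴ = -vecMulVec (Jform n *ᵥ v) c := by
    rw [← mul_vecMulVec, ← hN, conjTranspose_mul, (Jform_isHermitian n).eq, hskew]
  obtain ⟨μ, hμ, hc⟩ := exists_eq_smul_star_of_vecMulVec_skew hJv hK
  refine ⟨v, μ, hvv, hμ, ?_⟩
  rw [← sub_eq_iff_eq_add', hN, hc, star_mulVec, (Jform_isHermitian n).eq, vecMulVec_smul]
  rfl

lemma memU1_jReflection {u : Fin (n + 1) → ℂ} (hu : jForm (Jform n) u u = 1) :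
    memU1 n (jReflection (Jform n) u) :=
  conjTranspose_jReflection_mul_mul (Jform_isHermitian n) hu

end Signature

/-- A vertical translation (unipotent with `(T-1)² = 0`, `T ≠ 1`) in `U(n,1)`, `n ≥ 2`,
is a product of four involutions in `U(n,1)`. -/
theorem vertical_translation_product_four_involutions
    (n : ℕ) (hn : 2 ≤ n)
    (T : Matrix (Fin (n + 1)) (Fin (n + 1)) ℂ)
    (hT : memU1 n T)
    (hunip : (T - 1) ^ 2 = 0) (hne : T ≠ 1) :
    ∃ J₁ J₂ J₃ J₄ : Matrix (Fin (n + 1)) (Fin (n + 1)) ℂ,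
      memU1 n J₁ ∧ memU1 n J₂ ∧ memU1 n J₃ ∧ memU1 n J₄ ∧
      J₁ * J₁ = 1 ∧ J₂ * J₂ = 1 ∧ J₃ * J₃ = 1 ∧ J₄ * J₄ = 1 ∧
      T = J₁ * J₂ * J₃ * J₄ := by
  obtain ⟨v, μ, hvv, hμ, rfl⟩ := exists_isotropic_eq_one_add_smul_jOuter hT hunip hne
  obtain ⟨r, hrr, hvr⟩ := exists_unit_jOrthogonal hn v
  have hrv : jForm (Jform n) r v = 0 := by
    rw [← star_jForm (Jform_isHermitian n), hvr, star_zero]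
  have hunit : ∀ α : ℂ, jForm (Jform n) (r - α • v) (r - α • v) = 1 := fun α => by
    rw [jForm_sub_smul_sub_smul, hrr, hrv, hvr, hvv]
    ring
  exact ⟨_, _, _, _, memU1_jReflection (hunit _), memU1_jReflection (hunit _),
    memU1_jReflection (hunit _), memU1_jReflection (hunit _), jReflection_mul_self (hunit _),
    jReflection_mul_self (hunit _), jReflection_mul_self (hunit _),
    jReflection_mul_self (hunit _), one_add_smul_jOuter_eq_jReflection_mul hvv hvr hrv hrr hμ⟩
end
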